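/- If X ~ Gamma(M, α) with M ∈ ℕ, M ≥ 1 and α > 0, then E[log₂(1 + pX)] - log₂(pα) - ψ(M)/ln 2 → 0 as p → ∞. -/

import Mathlib

open MeasureTheory Real Set Filter

lemma myIntRpowExp {s b : ℝ} (hs : -1 < s) (hb : 0 < b) :
    IntegrableOn (fun x : ℝ => x ^ s * Real.exp (-(b * x))) (Ioi 0) := by
  have h := integrableOn_rpow_mul_exp_neg_mul_rpow hs (one_pos : (0:ℝ) < 1) hb
  simpa [Real.rpow_one, neg_mul] using h

lemma myAbsLog {x : ℝ} (hx : 0 < x) :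
    |Real.log x| ≤ 2 * (x ^ (1/2 : ℝ) + x ^ (-(1/2) : ℝ)) := by
  have h1 : (0:ℝ) < x ^ (1/2 : ℝ) := Real.rpow_pos_of_pos hx _
  have h2 : (0:ℝ) < x ^ (-(1/2) : ℝ) := Real.rpow_pos_of_pos hx _
  rcases le_or_gt 1 x with h | h
  · have hl : 0 ≤ Real.log x := Real.log_nonneg h
    rw [abs_of_nonneg hl]
    have : Real.log (x ^ (1/2 : ℝ)) ≤ x ^ (1/2:ℝ) - 1 := Real.log_le_sub_one_of_pos h1
    rw [Real.log_rpow hx] at this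
    nlinarith
  · have hl : Real.log x < 0 := Real.log_neg hx h
    rw [abs_of_nonpos hl.le]
    have : Real.log (x ^ (-(1/2) : ℝ)) ≤ x ^ (-(1/2):ℝ) - 1 := Real.log_le_sub_one_of_pos h2
    rw [Real.log_rpow hx] at this
    nlinarith

lemma myIntLogRpowExp {s b : ℝ} (hs : 0 ≤ s) (hb : 0 < b) :
    IntegrableOn (fun x : ℝ => Real.log x * (x ^ s * Real.exp (-(b * x)))) (Ioi 0) := by
  have hi1 := myIntRpowExp (s := s + 1/2) (by linarith) hb
  have hi2 := myIntRpowExp (s := s - 1/2) (by linarith) hb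
  have hbound : IntegrableOn
      (fun x : ℝ => 2 * (x ^ (s+1/2:ℝ) * Real.exp (-(b*x))) + 2 * (x ^ (s-1/2:ℝ) * Real.exp (-(b*x)))) (Ioi 0) :=
    ((hi1.const_mul 2).add (hi2.const_mul 2))
  apply Integrable.mono hbound
  · apply (ContinuousOn.aestronglyMeasurable ?_ measurableSet_Ioi)
    intro x hx
    have hx0 : x ≠ 0 := ne_of_gt hx
    exact ((Real.continuousAt_log hx0).continuousWithinAt).mul
      (((Real.continuousAt_rpow_const x s (Or.inl hx0)).continuousWithinAt).mul
        ((Real.continuous_exp.comp (continuous_const.mul continuous_id).neg).continuousWithinAt))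
  · filter_upwards [ae_restrict_mem measurableSet_Ioi] with x hx
    have hx0 : 0 < x := hx
    have he : 0 < Real.exp (-(b*x)) := Real.exp_pos _
    have hr : 0 < x ^ s := Real.rpow_pos_of_pos hx0 _
    rw [Real.norm_eq_abs, Real.norm_eq_abs, abs_mul, abs_of_pos (mul_pos hr he)]
    have h := myAbsLog hx0
    have key : |Real.log x| * (x ^ s * Real.exp (-(b*x))) ≤
        2 * (x ^ (s+1/2:ℝ) * Real.exp (-(b*x))) + 2 * (x ^ (s-1/2:ℝ) * Real.exp (-(b*x))) := by
      have e1 : x ^ (s+1/2:ℝ) = x ^ s * x ^ (1/2:ℝ) := Real.rpow_add hx0 _ _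
      have e2 : x ^ (s-1/2:ℝ) = x ^ s * x ^ (-(1/2):ℝ) := by
        rw [sub_eq_add_neg]; exact Real.rpow_add hx0 _ _
      rw [e1, e2]
      nlinarith [mul_le_mul_of_nonneg_right h (mul_pos hr he).le]
    calc |Real.log x| * (x ^ s * Real.exp (-(b*x))) ≤ _ := key
    _ ≤ |_| := le_abs_self _

lemma myGammaDeriv {s : ℝ} (hs : 0 < s) :
    HasDerivAt Real.Gamma
      (∫ t in Ioi (0:ℝ), t ^ (s - 1) * (Real.log t * Real.exp (-t))) s := by
  have hs' : 0 < (s : ℂ).re := by simpa using hs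
  have h1 := Complex.hasDerivAt_GammaIntegral hs'
  have h2 : HasDerivAt Complex.Gamma
      (∫ t : ℝ in Ioi 0, (t:ℂ) ^ ((s:ℂ) - 1) * (Real.log t * Real.exp (-t))) (s:ℂ) := by
    apply HasDerivAt.congr_of_eventuallyEq h1
    have hopen : IsOpen {z : ℂ | 0 < z.re} := isOpen_lt continuous_const Complex.continuous_re
    filter_upwards [hopen.mem_nhds hs'] with z hz
    exact Complex.Gamma_eq_integral hz
  have h3 := h2.real_of_complex
  have hfun : (fun x : ℝ => (Complex.Gamma (x:ℂ)).re) = Real.Gamma := by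
    funext x
    rw [Complex.Gamma_ofReal, Complex.ofReal_re]
  have hval : ((∫ t in Ioi (0:ℝ), t ^ (s - 1) * (Real.log t * Real.exp (-t)) : ℝ) : ℂ)
      = (∫ t : ℝ in Ioi 0, (t:ℂ) ^ ((s:ℂ) - 1) * (Real.log t * Real.exp (-t))) := by
    refine integral_ofReal.symm.trans <| setIntegral_congr_fun measurableSet_Ioi (fun t ht => ?_)
    have h : ((t ^ (s-1) : ℝ) : ℂ) = (t:ℂ) ^ ((s:ℂ) - 1) := by
      rw [Complex.ofReal_cpow (le_of_lt ht)]
      push_cast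
      ring_nf
    show ((t ^ (s-1) * (Real.log t * Real.exp (-t)) : ℝ) : ℂ) = _
    push_cast
    rw [h]
  rw [hfun] at h3
  rw [← hval, Complex.ofReal_re] at h3
  exact h3

/-- Digamma function ψ(x) = d/dx ln Γ(x). -/
noncomputable def digamma (x : ℝ) : ℝ := deriv (fun y => Real.log (Real.Gamma y)) x

lemma myDigamma {s : ℝ} (hs : 0 < s) :
    digamma s = (∫ t in Ioi (0:ℝ), t ^ (s - 1) * (Real.log t * Real.exp (-t))) / Real.Gamma s := by
  have hΓ : 0 < Real.Gamma s := Real.Gamma_pos_of_pos hs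
  have h : HasDerivAt (fun y => Real.log (Real.Gamma y))
      ((Real.Gamma s)⁻¹ * (∫ t in Ioi (0:ℝ), t ^ (s - 1) * (Real.log t * Real.exp (-t)))) s := by
    have hl := Real.hasDerivAt_log hΓ.ne'
    exact hl.comp s (myGammaDeriv hs)
  rw [digamma, h.deriv, inv_mul_eq_div]

lemma myE1 {s α : ℝ} (hs : 0 < s) (hα : 0 < α) :
    ∫ x in Ioi (0:ℝ), x ^ (s - 1) * Real.exp (-(α⁻¹ * x)) = α ^ s * Real.Gamma s := by
  rw [integral_rpow_mul_exp_neg_mul_Ioi hs (inv_pos.mpr hα), one_div, inv_inv]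

lemma myGammaInt {s : ℝ} (hs : 0 < s) :
    ∫ x in Ioi (0:ℝ), x ^ (s - 1) * Real.exp (-x) = Real.Gamma s := by
  have := myE1 hs one_pos
  simpa using this

lemma myE2 {s α : ℝ} (hs : 1 ≤ s) (hα : 0 < α) :
    ∫ x in Ioi (0:ℝ), Real.log x * (x ^ (s - 1) * Real.exp (-(α⁻¹ * x)))
      = α ^ s * Real.Gamma s * (Real.log α + digamma s) := by
  have hs0 : 0 < s := lt_of_lt_of_le one_pos hs
  have hΓ : 0 < Real.Gamma s := Real.Gamma_pos_of_pos hs0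
  set g : ℝ → ℝ := fun x => Real.log x * (x ^ (s - 1) * Real.exp (-(α⁻¹ * x))) with hg
  have hsub := integral_comp_mul_left_Ioi g 0 hα
  rw [mul_zero] at hsub
  -- ∫ t in Ioi 0, g (α * t) = α⁻¹ • ∫ x in Ioi 0, g x
  have hcongr : ∫ t in Ioi (0:ℝ), g (α * t)
      = ∫ t in Ioi (0:ℝ), α ^ (s-1) * ((Real.log α + Real.log t) * (t ^ (s-1) * Real.exp (-t))) := by
    refine setIntegral_congr_fun measurableSet_Ioi (fun t ht => ?_)
    have ht0 : 0 < t := ht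
    have h1 : (α * t) ^ (s - 1) = α ^ (s-1) * t ^ (s-1) :=
      Real.mul_rpow hα.le ht0.le
    have h2 : Real.log (α * t) = Real.log α + Real.log t :=
      Real.log_mul hα.ne' ht0.ne'
    have h3 : α⁻¹ * (α * t) = t := by field_simp
    simp only [hg, h1, h2, h3]
    ring
  have hi1 : IntegrableOn (fun t : ℝ => t ^ (s-1) * Real.exp (-t)) (Ioi 0) := by
    have := myIntRpowExp (s := s - 1) (by linarith) one_pos
    simpa using this
  have hi2 : IntegrableOn (fun t : ℝ => Real.log t * (t ^ (s-1) * Real.exp (-t))) (Ioi 0) := by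
    have := myIntLogRpowExp (s := s - 1) (by linarith) one_pos
    simpa using this
  have hsplit : ∫ t in Ioi (0:ℝ), α ^ (s-1) * ((Real.log α + Real.log t) * (t ^ (s-1) * Real.exp (-t)))
      = α ^ (s-1) * (Real.log α * Real.Gamma s
          + ∫ t in Ioi (0:ℝ), Real.log t * (t ^ (s-1) * Real.exp (-t))) := by
    rw [integral_const_mul]
    congr 1
    have : ∀ t : ℝ, (Real.log α + Real.log t) * (t ^ (s-1) * Real.exp (-t))
        = Real.log α * (t ^ (s-1) * Real.exp (-t)) + Real.log t * (t ^ (s-1) * Real.exp (-t)) := by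
      intro t; ring
    simp_rw [this]
    rw [integral_add (hi1.const_mul _) hi2, integral_const_mul, myGammaInt hs0]
  have hG : (∫ t in Ioi (0:ℝ), Real.log t * (t ^ (s-1) * Real.exp (-t)))
      = Real.Gamma s * digamma s := by
    rw [myDigamma hs0]
    rw [mul_div_cancel₀]
    · refine setIntegral_congr_fun measurableSet_Ioi (fun t ht => ?_)
      ring
    · exact hΓ.ne'
  have key : (∫ x in Ioi (0:ℝ), g x) = α * ∫ t in Ioi (0:ℝ), g (α * t) := by
    rw [hsub, smul_eq_mul, ← mul_assoc, mul_inv_cancel₀ hα.ne', one_mul]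
  have hpow : α * α ^ (s - 1) = α ^ s := by
    have h := Real.rpow_add hα 1 (s - 1)
    rw [Real.rpow_one] at h
    rw [← h]
    ring_nf
  calc (∫ x in Ioi (0:ℝ), g x) = α * ∫ t in Ioi (0:ℝ), g (α * t) := key
    _ = α * (α ^ (s-1) * (Real.log α * Real.Gamma s
          + ∫ t in Ioi (0:ℝ), Real.log t * (t ^ (s-1) * Real.exp (-t)))) := by
        rw [hcongr, hsplit]
    _ = α ^ s * Real.Gamma s * (Real.log α + digamma s) := by
        rw [hG, ← hpow]; ring

theorem stmt7 (M : ℕ) (hM : 1 ≤ M) (α : ℝ) (hα : 0 < α) :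
    Tendsto (fun p : ℝ =>
        (∫ x in Set.Ioi (0 : ℝ),
            Real.logb 2 (1 + p * x) *
              (x ^ (M - 1) * Real.exp (-x / α) / (Real.Gamma M * α ^ M)))
          - Real.logb 2 (p * α) - digamma M / Real.log 2)
      atTop (nhds 0) := by
  set m : ℝ := (M : ℝ) with hm
  have hm1 : (1:ℝ) ≤ m := by rw [hm]; exact_mod_cast hM
  have hm0 : (0:ℝ) < m := lt_of_lt_of_le one_pos hm1
  have hΓ : 0 < Real.Gamma m := Real.Gamma_pos_of_pos hm0
  set c : ℝ := Real.Gamma m * α ^ M with hcdef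
  have hc : 0 < c := mul_pos hΓ (pow_pos hα M)
  set pdf : ℝ → ℝ := fun x => x ^ (m - 1) * Real.exp (-(α⁻¹ * x)) / c with hpdf
  have hpow_eq : (α : ℝ) ^ M = α ^ m := (Real.rpow_natCast α M).symm
  have hnpow : ∀ x : ℝ, 0 < x → (x ^ (M - 1) : ℝ) = x ^ (m - 1) := by
    intro x hx
    rw [← Real.rpow_natCast x (M - 1)]
    congr 1
    rw [Nat.cast_sub hM, Nat.cast_one]
  have hαinv : 0 < α⁻¹ := inv_pos.mpr hα
  have hpdfpos : ∀ x : ℝ, 0 < x → 0 < pdf x := by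
    intro x hx
    have := Real.rpow_pos_of_pos hx (m - 1)
    have := Real.exp_pos (-(α⁻¹ * x))
    rw [hpdf]
    positivity
  -- integrability
  have Ipdf : IntegrableOn pdf (Ioi 0) := (myIntRpowExp (by linarith) hαinv).div_const c
  have Ilog : IntegrableOn (fun x => Real.log x * pdf x) (Ioi 0) := by
    refine IntegrableOn.congr_fun
      ((myIntLogRpowExp (s := m - 1) (by linarith) hαinv).div_const c)
      (fun x hx => ?_) measurableSet_Ioi
    simp [hpdf, mul_div_assoc]
  have Ix : IntegrableOn (fun x => x * pdf x) (Ioi 0) := by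
    refine IntegrableOn.congr_fun
      ((myIntRpowExp (s := m) (by linarith) hαinv).div_const c)
      (fun x hx => ?_) measurableSet_Ioi
    have hx0 : (0:ℝ) < x := hx
    have : x ^ m = x * x ^ (m - 1) := by
      have h := Real.rpow_add hx0 1 (m - 1)
      rw [Real.rpow_one] at h
      rw [← h]; ring_nf
    rw [hpdf]; simp only []
    rw [this]; ring
  have Iabslog : IntegrableOn (fun x => |Real.log x| * pdf x) (Ioi 0) := by
    refine IntegrableOn.congr_fun Ilog.abs (fun x hx => ?_) measurableSet_Ioi
    rw [abs_mul, abs_of_pos (hpdfpos x hx)]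
  have IB : IntegrableOn (fun x => (x + |Real.log x|) * pdf x) (Ioi 0) := by
    refine IntegrableOn.congr_fun (Ix.add Iabslog) (fun x hx => ?_) measurableSet_Ioi
    simp only [Pi.add_apply]
    ring
  -- values
  have Vpdf : ∫ x in Ioi (0:ℝ), pdf x = 1 := by
    rw [hpdf]
    simp only [integral_div]
    rw [myE1 hm0 hα, hcdef, hpow_eq, mul_comm, div_self (by positivity)]
  have Vlog : ∫ x in Ioi (0:ℝ), Real.log x * pdf x = Real.log α + digamma m := by
    have heq : (fun x => Real.log x * pdf x)
        = fun x => (Real.log x * (x ^ (m - 1) * Real.exp (-(α⁻¹ * x)))) / c := by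
      funext x; rw [hpdf]; ring
    rw [heq, integral_div, myE2 hm1 hα, hcdef, hpow_eq]
    have hne1 : Real.Gamma m ≠ 0 := hΓ.ne'
    have hne2 : α ^ m ≠ 0 := (Real.rpow_pos_of_pos hα m).ne'
    field_simp
  -- the error kernel
  set h : ℝ → ℝ → ℝ := fun p x => Real.log (1 + (p * x)⁻¹) * pdf x with hh
  have hmeas : ∀ p : ℝ, AEStronglyMeasurable (h p) (volume.restrict (Ioi 0)) := by
    intro p
    apply Measurable.aestronglyMeasurable
    apply Measurable.mul
    · exact Real.measurable_log.comp ((measurable_const.mul measurable_id).inv.const_add 1)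
    · exact ((measurable_id.pow_const _).mul
        (Real.measurable_exp.comp (measurable_const.mul measurable_id).neg)).div_const c
  have hbd : ∀ p : ℝ, 1 ≤ p → ∀ᵐ x ∂(volume.restrict (Ioi (0:ℝ))),
      ‖h p x‖ ≤ (x + |Real.log x|) * pdf x := by
    intro p hp
    have hp0 : 0 < p := lt_of_lt_of_le one_pos hp
    filter_upwards [ae_restrict_mem measurableSet_Ioi] with x hx
    have hx0 : (0:ℝ) < x := hx
    have hpx : 0 < p * x := mul_pos hp0 hx0
    have hipx : (0:ℝ) ≤ (p * x)⁻¹ := (inv_pos.mpr hpx).le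
    have hlog0 : 0 ≤ Real.log (1 + (p * x)⁻¹) := Real.log_nonneg (by linarith)
    have hpdf0 := (hpdfpos x hx0).le
    rw [hh]
    simp only []
    rw [Real.norm_eq_abs, abs_of_nonneg (mul_nonneg hlog0 hpdf0)]
    have step1 : Real.log (1 + (p * x)⁻¹) ≤ Real.log (1 + x⁻¹) := by
      apply Real.log_le_log (by linarith)
      have : x ≤ p * x := le_mul_of_one_le_left hx0.le hp
      have := inv_anti₀ hx0 this
      linarith
    have step2 : Real.log (1 + x⁻¹) ≤ x + |Real.log x| := by
      have hfrac : 1 + x⁻¹ = (x + 1) / x := by field_simp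
      rw [hfrac, Real.log_div (by positivity) hx0.ne']
      have h1 : Real.log (x + 1) ≤ x := by
        have := Real.log_le_sub_one_of_pos (show (0:ℝ) < x + 1 by linarith)
        linarith
      have h2' : -Real.log x ≤ |Real.log x| := by
        rw [← abs_neg]; exact le_abs_self _
      linarith
    exact mul_le_mul_of_nonneg_right (step1.trans step2) hpdf0
  have Ih : ∀ p : ℝ, 1 ≤ p → IntegrableOn (h p) (Ioi 0) := by
    intro p hp
    refine Integrable.mono IB (hmeas p) ?_
    filter_upwards [hbd p hp, ae_restrict_mem measurableSet_Ioi] with x h1 hx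
    refine h1.trans ?_
    rw [Real.norm_eq_abs]
    exact le_abs_self _
  have hzero : ∀ᵐ x ∂(volume.restrict (Ioi (0:ℝ))),
      Tendsto (fun p => h p x) atTop (nhds 0) := by
    filter_upwards [ae_restrict_mem measurableSet_Ioi] with x hx
    have hx0 : (0:ℝ) < x := hx
    have t1 : Tendsto (fun p : ℝ => p * x) atTop atTop :=
      Tendsto.atTop_mul_const hx0 tendsto_id
    have t2 : Tendsto (fun p : ℝ => (p * x)⁻¹) atTop (nhds 0) := t1.inv_tendsto_atTop
    have t3 : Tendsto (fun p : ℝ => 1 + (p * x)⁻¹) atTop (nhds 1) := by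
      have := tendsto_const_nhds (x := (1:ℝ)) (f := atTop (α := ℝ)) |>.add t2
      simpa using this
    have t4 : Tendsto (fun p : ℝ => Real.log (1 + (p * x)⁻¹)) atTop (nhds 0) := by
      have := (Real.continuousAt_log (by norm_num : (1:ℝ) ≠ 0)).tendsto.comp t3
      simpa [Function.comp_def] using this
    have := t4.mul_const (pdf x)
    simpa [hh] using this
  have hDCT : Tendsto (fun p => ∫ x in Ioi (0:ℝ), h p x) atTop (nhds 0) := by
    have := tendsto_integral_filter_of_dominated_convergence
      (μ := volume.restrict (Ioi (0:ℝ))) (F := h) (f := fun _ => (0:ℝ))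
      (bound := fun x => (x + |Real.log x|) * pdf x)
      (Eventually.of_forall hmeas)
      ((eventually_ge_atTop 1).mono hbd) IB hzero
    simpa using this
  -- eventual identification
  have hEq : ∀ᶠ p in atTop, (∫ x in Ioi (0:ℝ),
        Real.logb 2 (1 + p * x) * (x ^ (M - 1) * Real.exp (-x / α) / c))
        - Real.logb 2 (p * α) - digamma m / Real.log 2
      = (∫ x in Ioi (0:ℝ), h p x) / Real.log 2 := by
    filter_upwards [eventually_ge_atTop 1] with p hp
    have hp0 : 0 < p := lt_of_lt_of_le one_pos hp
    have hA : (∫ x in Ioi (0:ℝ),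
        Real.logb 2 (1 + p * x) * (x ^ (M - 1) * Real.exp (-x / α) / c))
        = (∫ x in Ioi (0:ℝ), Real.log (1 + p * x) * pdf x) / Real.log 2 := by
      rw [← integral_div]
      refine setIntegral_congr_fun measurableSet_Ioi (fun x hx => ?_)
      have hx0 : (0:ℝ) < x := hx
      rw [Real.logb, hnpow x hx0, hpdf]
      have hneg : -x / α = -(α⁻¹ * x) := by
        field_simp
      rw [hneg]
      ring
    have hptw : ∀ x ∈ Ioi (0:ℝ), Real.log (1 + p * x) * pdf x
        = h p x + (Real.log p * pdf x + Real.log x * pdf x) := by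
      intro x hx
      have hx0 : (0:ℝ) < x := hx
      have hpx : 0 < p * x := mul_pos hp0 hx0
      have hfac : 1 + p * x = (p * x) * (1 + (p * x)⁻¹) := by
        field_simp
        ring
      rw [hfac, Real.log_mul hpx.ne' (by positivity), Real.log_mul hp0.ne' hx0.ne', hh]
      ring
    have hsplit : (∫ x in Ioi (0:ℝ), Real.log (1 + p * x) * pdf x)
        = (∫ x in Ioi (0:ℝ), h p x) + (Real.log p + (Real.log α + digamma m)) := by
      have I1 : Integrable (fun x => Real.log p * pdf x + Real.log x * pdf x)
          (volume.restrict (Ioi (0:ℝ))) := (Ipdf.const_mul _).add Ilog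
      rw [setIntegral_congr_fun measurableSet_Ioi hptw]
      rw [integral_add (Ih p hp) I1, integral_add (Ipdf.const_mul _) Ilog,
        integral_const_mul, Vpdf, Vlog]
      ring
    rw [hA, hsplit, Real.logb, Real.log_mul hp0.ne' hα.ne']
    have hlog2 : Real.log 2 ≠ 0 := (Real.log_pos one_lt_two).ne'
    field_simp
    ring
  have hfinal := hDCT.div_const (Real.log 2)
  rw [zero_div] at hfinal
  exact Tendsto.congr' (by filter_upwards [hEq] with p hp using hp.symm) hfinal
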